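/- Let k ≥ 2 and d ≥ 2k be integers. Then the k-th largest distance eigenvalue of the path P_d on d vertices satisfies λ_k(D(P_d)) ≥ −1. -/

import Mathlib

/-!
Write `v_j = e_{2j} - e_{2j+1}` for `j < k`; these fit in `P_d` because `2k ≤ d`. They are pairwise
orthogonal with `‖v_j‖² = 2`, and since `D(P_d)` has entries `|u - v|` one computes
`⟪v_i, D v_j⟫ = -⟪v_i, v_j⟫`. So the Rayleigh quotient of `D` is `-1` on the `k`-dimensional span
of the `v_j`. That span meets the span of the eigenvectors with eigenvalue `< -1` only in `0`, so at
least `k` eigenvalues are `≥ -1`, i.e. `λ_k ≥ -1`.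
-/

open Finset SimpleGraph

/-- The distance matrix of a simple graph on `Fin n`, as a real matrix: the
`(i,j)` entry is the graph distance `d_G(i,j)`. -/
noncomputable def distMatrix {n : ℕ} (G : SimpleGraph (Fin n)) :
    Matrix (Fin n) (Fin n) ℝ :=
  fun i j => (G.dist i j : ℝ)

/-- The eigenvalues of the distance matrix, listed in decreasing order. -/
noncomputable def distEigList {n : ℕ} (G : SimpleGraph (Fin n)) : List ℝ :=
  if h : (distMatrix G).IsHermitian then
    (List.ofFn h.eigenvalues).insertionSort (· ≥ ·)
  else []

/-- `distEig G k` is the `k`-th largest distance eigenvalue `λ_k(D(G))` (`1`-indexed). -/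
noncomputable def distEig {n : ℕ} (G : SimpleGraph (Fin n)) (k : ℕ) : ℝ :=
  (distEigList G).getD (k - 1) 0

/-- `S_k(D(G))`, the sum of the `k` largest distance eigenvalues. -/
noncomputable def distEigSum {n : ℕ} (G : SimpleGraph (Fin n)) (k : ℕ) : ℝ :=
  ((distEigList G).take k).sum

/-- `G` has independence number at most `s`: every set of pairwise
nonadjacent vertices has at most `s` elements. -/
def IndepNumLE {V : Type*} (G : SimpleGraph V) (s : ℕ) : Prop :=
  ∀ S : Finset V, (∀ u ∈ S, ∀ v ∈ S, u ≠ v → ¬ G.Adj u v) → S.card ≤ s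

open Module
open scoped InnerProductSpace RealInnerProductSpace

theorem List.le_getD_of_lt_countP {α : Type*} [LinearOrder α] {t : α} :
    ∀ {l : List α} {m : ℕ}, l.Pairwise (· ≥ ·) → m < l.countP (fun x => decide (t ≤ x)) →
      ∀ d, t ≤ l.getD m d
  | [], _, _, h, _ => by simp at h
  | a :: l, 0, hl, h, _ => by
    obtain ⟨x, hx, htx⟩ := List.countP_pos_iff.1 (Nat.zero_lt_of_lt h)
    rw [List.getD_cons_zero]
    rcases List.mem_cons.1 hx with rfl | hx
    · simpa using htx
    · exact le_trans (by simpa using htx) ((List.pairwise_cons.1 hl).1 x hx)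
  | a :: l, m + 1, hl, h, d => by
    rw [List.getD_cons_succ]
    refine List.le_getD_of_lt_countP (List.pairwise_cons.1 hl).2 ?_ d
    rw [List.countP_cons] at h
    split at h <;> omega

theorem OrthonormalBasis.inner_map_self_eq_sum {ι E : Type*} [Fintype ι] [NormedAddCommGroup E]
    [InnerProductSpace ℝ E] (b : OrthonormalBasis ι ℝ E) {T : E →ₗ[ℝ] E} {μ : ι → ℝ}
    (hT : ∀ i, T (b i) = μ i • b i) (x : E) :
    ⟪x, T x⟫ = ∑ i, μ i * ⟪b i, x⟫ ^ 2 := by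
  nth_rw 2 [← b.sum_repr' x]
  simp only [map_sum, map_smul, hT, inner_sum, inner_smul_right, real_inner_comm x]
  exact sum_congr rfl fun i _ => by ring

theorem OrthonormalBasis.finrank_le_card_of_rayleigh_ge {ι E : Type*} [Fintype ι]
    [NormedAddCommGroup E] [InnerProductSpace ℝ E] (b : OrthonormalBasis ι ℝ E)
    {T : E →ₗ[ℝ] E} {μ : ι → ℝ} (hT : ∀ i, T (b i) = μ i • b i) {W : Submodule ℝ E} {t : ℝ}
    (hW : ∀ x ∈ W, t * ‖x‖ ^ 2 ≤ ⟪x, T x⟫) :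
    finrank ℝ W ≤ #{i | t ≤ μ i} := by
  let φ : W →ₗ[ℝ] {i // t ≤ μ i} → ℝ :=
    LinearMap.pi fun i => (innerₛₗ ℝ (b i)).comp W.subtype
  suffices Function.Injective φ by
    simpa [Fintype.card_subtype] using LinearMap.finrank_le_finrank_of_injective this
  rw [← LinearMap.ker_eq_bot, Submodule.eq_bot_iff]
  rintro ⟨x, hxW⟩ hx
  by_contra hx0
  have hcoord : ∀ i, ⟪b i, x⟫ ≠ 0 → μ i < t := fun i hi => by
    by_contra! h
    exact hi (congrFun hx ⟨i, h⟩)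
  have hpos : 0 < ∑ i, (t - μ i) * ⟪b i, x⟫ ^ 2 := by
    obtain ⟨i, hi⟩ : ∃ i, ⟪b i, x⟫ ≠ 0 := by
      by_contra! h
      have hx : x = 0 := by rw [← b.sum_repr' x]; simp [h]
      subst hx
      exact hx0 rfl
    refine sum_pos' (fun j _ => ?_) ⟨i, mem_univ i, ?_⟩
    · by_cases hj : ⟪b j, x⟫ = 0
      · simp [hj]
      · exact mul_nonneg (by linarith [hcoord j hj]) (sq_nonneg _)
    · exact mul_pos (by linarith [hcoord i hi]) (by positivity)
  have hrayleigh := hW x hxW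
  rw [b.inner_map_self_eq_sum hT, ← b.sum_sq_inner_right, mul_sum] at hrayleigh
  simp only [sub_mul, sum_sub_distrib] at hpos
  linarith

theorem Matrix.IsHermitian.finrank_le_card_eigenvalues_ge {n : Type*} [Fintype n]
    [DecidableEq n] {A : Matrix n n ℝ} (hA : A.IsHermitian)
    {W : Submodule ℝ (EuclideanSpace ℝ n)} {t : ℝ}
    (hW : ∀ x ∈ W, t * ‖x‖ ^ 2 ≤ ⟪x, Matrix.toLpLin 2 2 A x⟫) :
    finrank ℝ W ≤ #{i | t ≤ hA.eigenvalues i} :=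
  hA.eigenvectorBasis.finrank_le_card_of_rayleigh_ge
    (fun i => by rw [Matrix.toLpLin_apply, hA.mulVec_eigenvectorBasis]; rfl) hW

theorem inner_map_self_eq_zero_of_mem_span {𝕜 E : Type*} [RCLike 𝕜] [NormedAddCommGroup E]
    [InnerProductSpace 𝕜 E] {s : Set E} {f : E →ₗ[𝕜] E}
    (h : ∀ u ∈ s, ∀ v ∈ s, ⟪u, f v⟫_𝕜 = 0) {x : E} (hx : x ∈ Submodule.span 𝕜 s) :
    ⟪x, f x⟫_𝕜 = 0 := by
  have hortho : Submodule.span 𝕜 s ⟂ Submodule.span 𝕜 (f '' s) :=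
    Submodule.isOrtho_span.2 fun u hu _ ⟨v, hv, hfv⟩ => hfv ▸ h u hu v hv
  refine hortho.inner_eq hx ?_
  rw [← Submodule.map_span]
  exact Submodule.mem_map_of_mem hx

theorem distMatrix_isHermitian {n : ℕ} (G : SimpleGraph (Fin n)) : (distMatrix G).IsHermitian := by
  ext i j
  simp [distMatrix, Matrix.conjTranspose_apply, SimpleGraph.dist_comm]

theorem le_distEig_of_le_card {n : ℕ} {G : SimpleGraph (Fin n)} (hA : (distMatrix G).IsHermitian)
    {k : ℕ} (hk : 0 < k) {t : ℝ} (h : k ≤ #{i | t ≤ hA.eigenvalues i}) : t ≤ distEig G k := by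
  rw [distEig, distEigList, dif_pos hA]
  refine List.le_getD_of_lt_countP (List.pairwise_insertionSort _ _) ?_ 0
  rw [(List.perm_insertionSort _ _).countP_eq, ← Multiset.coe_countP, ← Fin.univ_val_map,
    Multiset.countP_map, ← Finset.filter_val, ← Finset.card_def]
  omega

theorem SimpleGraph.Walk.abs_sub_le_length_of_pathGraph {n : ℕ} {u v : Fin n}
    (p : (pathGraph n).Walk u v) : |(u : ℤ) - v| ≤ p.length := by
  induction p with
  | nil => simp
  | cons hadj _ ih =>
    rw [pathGraph_adj] at hadj
    rw [Walk.length_cons, abs_le] at *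
    push_cast
    omega

theorem SimpleGraph.pathGraph_dist_le_of_add_eq {n : ℕ} :
    ∀ (m : ℕ) {u v : Fin n}, (u : ℕ) + m = v → (pathGraph n).dist u v ≤ m
  | 0, u, v, h => by
    obtain rfl : u = v := Fin.ext (by simpa using h)
    simp
  | m + 1, u, v, h => by
    let w : Fin n := ⟨u + m, by omega⟩
    have hadj : (pathGraph n).Adj w v :=
      pathGraph_adj.2 (Or.inl (by change (u : ℕ) + m + 1 = v; omega))
    obtain ⟨n, rfl⟩ := Nat.exists_eq_add_one.2 u.pos
    calc _ ≤ (pathGraph _).dist u w + (pathGraph _).dist w v :=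
          (pathGraph_connected n).dist_triangle
      _ ≤ m + 1 := by
          rw [dist_eq_one_iff_adj.2 hadj]
          exact Nat.add_le_add_right (pathGraph_dist_le_of_add_eq m rfl) 1

theorem SimpleGraph.pathGraph_dist {n : ℕ} (u v : Fin n) :
    ((pathGraph n).dist u v : ℤ) = |(u : ℤ) - v| := by
  refine le_antisymm ?_ ?_
  · wlog huv : u ≤ v generalizing u v
    · rw [dist_comm, abs_sub_comm]
      exact this v u (le_of_not_ge huv)
    have := pathGraph_dist_le_of_add_eq (v - u) (Nat.add_sub_cancel' (Fin.le_def.1 huv))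
    rw [abs_of_nonpos (by omega)]
    omega
  · obtain ⟨n, rfl⟩ := Nat.exists_eq_add_one.2 u.pos
    obtain ⟨p, hp⟩ := (pathGraph_connected n).exists_walk_length_eq_dist u v
    exact hp ▸ p.abs_sub_le_length_of_pathGraph

theorem distMatrix_pathGraph (n : ℕ) :
    distMatrix (pathGraph n) = Matrix.of fun u v : Fin n => |(u : ℝ) - v| := by
  ext u v
  simp only [distMatrix, Matrix.of_apply]
  exact_mod_cast pathGraph_dist u v

noncomputable def pathDipole {d k : ℕ} (hd : 2 * k ≤ d) (j : Fin k) : EuclideanSpace ℝ (Fin d) :=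
  EuclideanSpace.single ⟨2 * j, by omega⟩ 1 - EuclideanSpace.single ⟨2 * j + 1, by omega⟩ 1

section PathDipole

variable {d k : ℕ} (hd : 2 * k ≤ d)

theorem inner_pathDipole_left (i : Fin k) (w : EuclideanSpace ℝ (Fin d)) :
    ⟪pathDipole hd i, w⟫ = w ⟨2 * i, by omega⟩ - w ⟨2 * i + 1, by omega⟩ := by
  simp [pathDipole, inner_sub_left, EuclideanSpace.inner_single_left]

theorem inner_pathDipole (i j : Fin k) :
    ⟪pathDipole hd i, pathDipole hd j⟫ = if i = j then 2 else 0 := by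
  rw [inner_pathDipole_left]
  simp only [pathDipole, PiLp.sub_apply, PiLp.single_apply, Fin.ext_iff]
  split_ifs <;> first | omega | norm_num

theorem inner_pathDipole_distMatrix (i j : Fin k) :
    ⟪pathDipole hd i, Matrix.toLpLin 2 2 (distMatrix (pathGraph d)) (pathDipole hd j)⟫ =
      if i = j then -2 else 0 := by
  rw [inner_pathDipole_left]
  simp only [pathDipole, Matrix.toLpLin_apply, WithLp.ofLp_sub, PiLp.ofLp_single,
    Matrix.mulVec_sub, Matrix.mulVec_single_one, WithLp.toLp_sub, PiLp.sub_apply,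
    Matrix.col_apply, distMatrix_pathGraph, Matrix.of_apply]
  push_cast
  -- off the diagonal `2a - 2b` is even and nonzero, so `|2a - 2b - 1| + |2a - 2b + 1| = 2|2a - 2b|`
  have hcancel : ∀ a b : ℤ, |2 * a - 2 * b| - |2 * a - (2 * b + 1)| -
      (|2 * a + 1 - 2 * b| - |2 * a + 1 - (2 * b + 1)|) = if a = b then -2 else 0 := fun a b => by
    split_ifs <;> simp only [abs_eq_max_neg] <;> omega
  simp only [Fin.ext_iff]
  exact_mod_cast hcancel i j

theorem linearIndependent_pathDipole : LinearIndependent ℝ (pathDipole hd) := by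
  refine linearIndependent_of_ne_zero_of_inner_eq_zero (fun i h => ?_) fun i j hij => ?_
  · simpa [h] using inner_pathDipole hd i i
  · simpa [hij] using inner_pathDipole hd i j

theorem inner_distMatrix_pathGraph_eq_neg_norm_sq {x : EuclideanSpace ℝ (Fin d)}
    (hx : x ∈ Submodule.span ℝ (Set.range (pathDipole hd))) :
    ⟪x, Matrix.toLpLin 2 2 (distMatrix (pathGraph d)) x⟫ = -‖x‖ ^ 2 := by
  have := inner_map_self_eq_zero_of_mem_span
    (f := Matrix.toLpLin 2 2 (distMatrix (pathGraph d)) + LinearMap.id) ?_ hx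
  · rw [LinearMap.add_apply, inner_add_right, LinearMap.id_apply,
      real_inner_self_eq_norm_sq] at this
    linarith
  rintro _ ⟨i, rfl⟩ _ ⟨j, rfl⟩
  rw [LinearMap.add_apply, inner_add_right, LinearMap.id_apply, inner_pathDipole,
    inner_pathDipole_distMatrix]
  split_ifs <;> norm_num

end PathDipole

theorem kth_largest_distance_eigenvalue_path_ge_neg_one {k d : ℕ}
    (hk : 2 ≤ k) (hd : 2 * k ≤ d) :
    distEig (pathGraph d) k ≥ -1 := by
  have hA := distMatrix_isHermitian (pathGraph d)
  refine le_distEig_of_le_card hA (by omega) ?_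
  calc k = finrank ℝ (Submodule.span ℝ (Set.range (pathDipole hd))) := by
        rw [finrank_span_eq_card (linearIndependent_pathDipole hd), Fintype.card_fin]
    _ ≤ _ := hA.finrank_le_card_eigenvalues_ge fun x hx => by
        rw [inner_distMatrix_pathGraph_eq_neg_norm_sq hd hx, neg_one_mul]
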